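/- Let X and Y be Banach spaces such that either X or Y has the Dunford-Pettis property. Then for every bounded linear operator T : X → Y* and every weakly null sequence (xₙ) in X, the set {T(xₙ) : n ∈ ℕ} is Y-limited. -/

import Mathlib

open Filter Topology

/-- A sequence in a normed space is weakly null if it tends to `0` in the weak topology,
i.e. `f (y n) → 0` for every continuous linear functional `f`. -/
def WeaklyNullSeq {Y : Type*} [NormedAddCommGroup Y] [NormedSpace ℝ Y] (y : ℕ → Y) : Prop :=
  ∀ f : Y →L[ℝ] ℝ, Tendsto (fun n => f (y n)) atTop (𝓝 0)

/-- A set `H ⊆ Y*` is `Y`-limited if every weakly null sequence in `Y` converges to `0`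
uniformly on `H`. -/
def YLimited {Y : Type*} [NormedAddCommGroup Y] [NormedSpace ℝ Y]
    (H : Set (Y →L[ℝ] ℝ)) : Prop :=
  ∀ y : ℕ → Y, WeaklyNullSeq y →
    ∀ ε > (0 : ℝ), ∃ N : ℕ, ∀ n ≥ N, ∀ f ∈ H, |f (y n)| ≤ ε

/-- A Banach space `X` has the Dunford-Pettis property if `x*ₙ(xₙ) → 0` for all weakly
null sequences `(x*ₙ)` in `X*` and `(xₙ)` in `X`. -/
def DunfordPettisProp (X : Type*) [NormedAddCommGroup X] [NormedSpace ℝ X] : Prop :=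
  ∀ (φ : ℕ → (X →L[ℝ] ℝ)) (x : ℕ → X), WeaklyNullSeq φ → WeaklyNullSeq x →
    Tendsto (fun n => φ n (x n)) atTop (𝓝 0)

/-!
If the set `{T xₖ}` were not `Y`-limited, there would be `ε > 0`, indices `mₙ → ∞` and `kₙ`
with `|T x_{kₙ} (y_{mₙ})| > ε`. If some `k` occurs infinitely often among the `kₙ`, this
contradicts `T xₖ (y_m) → 0`. Otherwise `kₙ → ∞`, so `x_{kₙ}` and `y_{mₙ}` are weakly null and
the Dunford-Pettis property of `X` (applied to `T' y_{mₙ}`, with `T'` the transpose of `T`) or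
of `Y` (applied to `T x_{kₙ}`) forces `T x_{kₙ} (y_{mₙ}) → 0`.
-/

theorem Filter.tendsto_atTop_of_forall_eventually_ne {α : Type*} {l : Filter α} {k : α → ℕ}
    (h : ∀ j, ∀ᶠ a in l, k a ≠ j) : Tendsto k l atTop :=
  tendsto_atTop.2 fun b =>
    ((eventually_all_finite (Set.finite_Iio b)).2 fun j _ => h j).mono
      fun _ ha => not_lt.1 fun hlt => ha _ hlt rfl

theorem exists_forall_abs_le_of_tendsto_zero {a : ℕ → ℕ → ℝ}
    (hcol : ∀ k, Tendsto (a k) atTop (𝓝 0))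
    (hdiag : ∀ k m : ℕ → ℕ, Tendsto k atTop atTop → Tendsto m atTop atTop →
      Tendsto (fun n => a (k n) (m n)) atTop (𝓝 0))
    {ε : ℝ} (hε : 0 < ε) : ∃ M, ∀ m ≥ M, ∀ k, |a k m| ≤ ε := by
  by_contra! hbad
  choose m hm k hk using hbad
  have hm_top : Tendsto m atTop atTop := tendsto_atTop_mono hm tendsto_id
  have hsmall : ∀ {u : ℕ → ℝ}, Tendsto u atTop (𝓝 0) → ∀ᶠ n in atTop, |u n| < ε := fun hu =>
    (Metric.tendsto_nhds.1 hu ε hε).mono fun _ hn => by rwa [Real.dist_eq, sub_zero] at hn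
  by_cases hrep : ∃ j, ∃ᶠ n in atTop, k n = j
  · obtain ⟨j, hj⟩ := hrep
    obtain ⟨n, hkn, hsm⟩ := (hj.and_eventually (hsmall ((hcol j).comp hm_top))).exists
    exact (hk n).not_gt (hkn ▸ hsm)
  · simp only [not_exists, not_frequently] at hrep
    have hk_top : Tendsto k atTop atTop := tendsto_atTop_of_forall_eventually_ne hrep
    obtain ⟨n, hn⟩ := (hsmall (hdiag k m hk_top hm_top)).exists
    exact (hk n).not_gt hn

section WeaklyNull

variable {X Y : Type*} [NormedAddCommGroup X] [NormedSpace ℝ X]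
  [NormedAddCommGroup Y] [NormedSpace ℝ Y]

theorem WeaklyNullSeq.comp_tendsto {x : ℕ → X} (hx : WeaklyNullSeq x) {k : ℕ → ℕ}
    (hk : Tendsto k atTop atTop) : WeaklyNullSeq (x ∘ k) :=
  fun f => (hx f).comp hk

theorem WeaklyNullSeq.map {x : ℕ → X} (hx : WeaklyNullSeq x) (T : X →L[ℝ] Y) :
    WeaklyNullSeq (T ∘ x) :=
  fun f => hx (f.comp T)

theorem DunfordPettisProp.tendsto_apply_left (hX : DunfordPettisProp X)
    (T : X →L[ℝ] Y →L[ℝ] ℝ) {x : ℕ → X} {y : ℕ → Y} (hx : WeaklyNullSeq x)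
    (hy : WeaklyNullSeq y) : Tendsto (fun n => T (x n) (y n)) atTop (𝓝 0) :=
  hX (T.flip ∘ y) x (hy.map T.flip) hx

theorem DunfordPettisProp.tendsto_apply_right (hY : DunfordPettisProp Y)
    (T : X →L[ℝ] Y →L[ℝ] ℝ) {x : ℕ → X} {y : ℕ → Y} (hx : WeaklyNullSeq x)
    (hy : WeaklyNullSeq y) : Tendsto (fun n => T (x n) (y n)) atTop (𝓝 0) :=
  hY (T ∘ x) y (hx.map T) hy

end WeaklyNull

theorem range_image_weaklyNull_isLimited_of_dunfordPettis_general
    {X Y : Type*} [NormedAddCommGroup X] [NormedSpace ℝ X]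
    [NormedAddCommGroup Y] [NormedSpace ℝ Y]
    (hDP : DunfordPettisProp X ∨ DunfordPettisProp Y)
    (T : X →L[ℝ] (Y →L[ℝ] ℝ)) (x : ℕ → X) (hx : WeaklyNullSeq x) :
    YLimited {f | ∃ n : ℕ, f = T (x n)} := by
  intro y hy ε hε
  have hdiag : ∀ k m : ℕ → ℕ, Tendsto k atTop atTop → Tendsto m atTop atTop →
      Tendsto (fun n => T (x (k n)) (y (m n))) atTop (𝓝 0) := fun k m hk hm =>
    hDP.elim (·.tendsto_apply_left T (hx.comp_tendsto hk) (hy.comp_tendsto hm))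
      (·.tendsto_apply_right T (hx.comp_tendsto hk) (hy.comp_tendsto hm))
  obtain ⟨M, hM⟩ := exists_forall_abs_le_of_tendsto_zero (fun k => hy (T (x k))) hdiag hε
  exact ⟨M, fun m hm _ ⟨k, hk⟩ => hk ▸ hM m hm k⟩

/-- Let `X` and `Y` be Banach spaces such that either `X` or `Y` has the
Dunford-Pettis property. Then for every bounded linear operator `T : X → Y*` and every
weakly null sequence `(xₙ)` in `X`, the set `{T xₙ : n ∈ ℕ}` is `Y`-limited. -/
theorem range_image_weaklyNull_isLimited_of_dunfordPettis
    {X Y : Type*} [NormedAddCommGroup X] [NormedSpace ℝ X] [CompleteSpace X]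
    [NormedAddCommGroup Y] [NormedSpace ℝ Y] [CompleteSpace Y]
    (hDP : DunfordPettisProp X ∨ DunfordPettisProp Y)
    (T : X →L[ℝ] (Y →L[ℝ] ℝ)) (x : ℕ → X) (hx : WeaklyNullSeq x) :
    YLimited {f | ∃ n : ℕ, f = T (x n)} :=
  range_image_weaklyNull_isLimited_of_dunfordPettis_general hDP T x hx
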